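/- Let A be an integral domain that is a finitely generated ℂ-algebra, x ∈ A a prime element, ν ≥ 1 an integer, g(Z) ∈ A[Z]∖A, g_i ∈ A[Z,Y₁,…,Y_i]∖A[Z,Y₁,…,Y_{i−1}] for 1 ≤ i ≤ ν−1, and ℓ₀,…,ℓ_{ν−1} positive integers. Let I be the ideal of the polynomial ring A[Z,Y₁,…,Y_ν] generated by x^{ℓ₀}Y₁ − g(Z) and x^{ℓ_i}Y_{i+1} − g_i(Z,Y₁,…,Y_i) for 1 ≤ i ≤ ν−1, and let B = A[Z,Y₁,…,Y_ν]/I, assumed to be an integral domain, with z, y₁, …, y_ν the residue classes of Z, Y₁, …, Y_ν. Suppose that B is a unique factorization domain, B is faithfully flat as an A-module, and A (identified with its image in B) is factorially closed in B. If z − a ∉ xB for every a ∈ A, and the image in B of ∂g_{ν−1}/∂Y_{ν−1} evaluated at (z, y₁, …, y_{ν−1}) does not lie in xB (with the convention that for ν = 1 this element is g'(z)), then B is not isomorphic as an A-algebra to the polynomial ring A[T]; i.e. the morphism Spec B → Spec A is not a trivial 𝔸¹-bundle. -/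

import Mathlib

/-!
Suppose `φ : B ≃ₐ[A] A[T]` and put `p = φ z`. The hypothesis `z - a ∉ xB` says that `p` stays
nonconstant modulo the prime `x`, so substituting `p` is injective on `(A/x)[T]`: if `x ∣ F(z)` in
`B` then `x ∣ F` in `A[T]`. Dividing the relations `x^ℓᵢ yᵢ₊₁ = gᵢ(z, y₁, …, yᵢ)` by `x` one
power at a time puts every `yᵢ` in `A[z]`, say `yᵢ = Qᵢ(z)`, so `Y_ν - Q_ν(Z)` lies in `I`. But
`f ↦ (∂f/∂Y_ν)(Q₀(T), …, Q_ν(T)) mod x` vanishes on `I`: by the Leibniz rule it suffices to check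
the generators, which substitute to multiples of `x` and contain `Y_ν` only in `x^ℓ Y_ν`. It sends
`Y_ν - Q_ν(Z)` to `1`, contradicting that `x` is not a unit.
-/

open Polynomial

namespace Polynomial

variable {A : Type*} [CommRing A]

lemma C_dvd_iff_map_mk_eq_zero (x : A) (F : A[X]) :
    C x ∣ F ↔ F.map (Ideal.Quotient.mk (Ideal.span {x})) = 0 := by
  simp [C_dvd_iff_dvd_coeff, Polynomial.ext_iff, Ideal.Quotient.eq_zero_iff_dvd]

lemma C_dvd_of_C_dvd_comp {x : A} (hx : Prime x) {p : A[X]} (hp : ∀ a, ¬ C x ∣ p - C a)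
    {F : A[X]} (h : C x ∣ F.comp p) : C x ∣ F := by
  have := (Ideal.span_singleton_prime hx.ne_zero).mpr hx
  rw [C_dvd_iff_map_mk_eq_zero, map_comp, comp_eq_zero_iff] at h
  rcases h with hF | ⟨-, hpC⟩
  · exact (C_dvd_iff_map_mk_eq_zero x F).mpr hF
  · refine absurd ((C_dvd_iff_map_mk_eq_zero x _).mpr ?_) (hp (p.coeff 0))
    rw [Polynomial.map_sub, hpC, map_C, coeff_map, sub_self]

end Polynomial

namespace MvPolynomial

variable {R σ : Type*}

lemma pderiv_eq_zero_of_mem_supported [CommSemiring R] {s : Set σ} {i : σ} (hi : i ∉ s)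
    {f : MvPolynomial σ R} (hf : f ∈ supported R s) : pderiv i f = 0 :=
  pderiv_eq_zero_of_notMem_vars fun h => hi (mem_supported.mp hf h)

lemma apply_mem_of_mem_supported [CommSemiring R] {B : Type*} [CommSemiring B] [Algebra R B]
    (π : MvPolynomial σ R →ₐ[R] B) {s : Set σ} {S : Subalgebra R B}
    (hS : ∀ i ∈ s, π (X i) ∈ S) {f : MvPolynomial σ R} (hf : f ∈ supported R s) : π f ∈ S :=
  (Algebra.adjoin_le (Set.image_subset_iff.mpr hS) : supported R s ≤ S.comap π) hf

lemma map_pderiv_mem_of_mem_span [CommSemiring R] {S : Type*} [CommSemiring S]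
    (ψ : MvPolynomial σ R →+* S) (J : Ideal S) (i : σ) {s : Set (MvPolynomial σ R)}
    (hs : ∀ f ∈ s, ψ f ∈ J ∧ ψ (pderiv i f) ∈ J) {f : MvPolynomial σ R}
    (hf : f ∈ Ideal.span s) : ψ (pderiv i f) ∈ J := by
  have hspan : Ideal.span s ≤ J.comap ψ := Ideal.span_le.mpr fun f hf => (hs f hf).1
  induction hf using Submodule.span_induction with
  | mem f hf => exact (hs f hf).2
  | zero => simp
  | add f g _ _ hf hg => rw [map_add, map_add]; exact J.add_mem hf hg
  | smul a f hf' hf =>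
    rw [smul_eq_mul, pderiv_mul, map_add, map_mul, map_mul]
    exact J.add_mem (J.mul_mem_left _ (hspan hf')) (J.mul_mem_left _ hf)

lemma pderiv_X_sub_aeval_X [CommRing R] {i j : σ} (hij : j ≠ i) (q : R[X]) :
    pderiv i (X i - Polynomial.aeval (X j : MvPolynomial σ R) q) = 1 := by
  have hq : Polynomial.aeval (X j : MvPolynomial σ R) q ∈ supported R {j} := by
    rw [supported_eq_adjoin_X, Set.image_singleton]
    exact Polynomial.aeval_mem_adjoin_singleton R _
  rw [map_sub, pderiv_X_self,
    pderiv_eq_zero_of_mem_supported (Set.mem_singleton_iff.not.mpr hij.symm) hq, sub_zero]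

end MvPolynomial

section

variable {A B : Type*} [CommRing A] [CommRing B] [Algebra A B]

lemma C_dvd_of_algebraMap_dvd_aeval (φ : B ≃ₐ[A] A[X]) {x : A} (hx : Prime x) {z : B}
    (hz : ∀ a, ¬ algebraMap A B x ∣ z - algebraMap A B a) (F : A[X])
    (h : algebraMap A B x ∣ aeval z F) : C x ∣ F := by
  have hφ : ∀ {a : A} {b : B}, algebraMap A B a ∣ b ↔ C a ∣ φ b := fun {a b} => by
    rw [← map_dvd_iff φ, AlgEquiv.commutes, algebraMap_eq]
  refine C_dvd_of_C_dvd_comp hx (p := φ z) (fun a ha => hz a ?_) ?_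
  · rwa [hφ, map_sub, AlgEquiv.commutes, algebraMap_eq]
  · rwa [comp_eq_aeval, aeval_algHom_apply, ← hφ]

lemma mem_range_aeval_of_pow_mul_mem [IsDomain B] {x : A} (hx : algebraMap A B x ≠ 0) {z : B}
    (hsat : ∀ F : A[X], algebraMap A B x ∣ aeval z F → C x ∣ F) (m : ℕ) {b : B}
    (hb : algebraMap A B x ^ m * b ∈ (aeval (R := A) z).range) :
    b ∈ (aeval (R := A) z).range := by
  induction m with
  | zero => simpa using hb
  | succ m ih =>
    obtain ⟨F, hF⟩ := (AlgHom.mem_range _).mp hb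
    have hdvd : algebraMap A B x ∣ aeval z F := ⟨algebraMap A B x ^ m * b, by rw [hF]; ring⟩
    obtain ⟨G, rfl⟩ := hsat F hdvd
    refine ih ((AlgHom.mem_range _).mpr ⟨G, mul_left_cancel₀ hx ?_⟩)
    rw [← mul_assoc, ← pow_succ', ← hF, map_mul, aeval_C]

lemma X_mem_range_aeval_of_triangular [IsDomain B] {x : A} (hx : algebraMap A B x ≠ 0)
    {ν : ℕ} {π : MvPolynomial (Fin (ν + 1)) A →ₐ[A] B}
    (hsat : ∀ F : A[X], algebraMap A B x ∣ aeval (π (MvPolynomial.X 0)) F → C x ∣ F)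
    {gs : Fin ν → MvPolynomial (Fin (ν + 1)) A}
    (hgs : ∀ i : Fin ν, gs i ∈ MvPolynomial.supported A {j : Fin (ν + 1) | (j : ℕ) ≤ (i : ℕ)})
    {ℓ : Fin ν → ℕ} (hπker : RingHom.ker π = Ideal.span (Set.range fun i : Fin ν =>
      (MvPolynomial.C x) ^ ℓ i * MvPolynomial.X i.succ - gs i))
    (i : Fin (ν + 1)) : π (MvPolynomial.X i) ∈ (aeval (R := A) (π (MvPolynomial.X 0))).range := by
  induction i using WellFoundedLT.induction with | ind i ih
  cases i using Fin.cases with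
  | zero => exact (AlgHom.mem_range _).mpr ⟨X, aeval_X _⟩
  | succ j =>
    have hgen : algebraMap A B x ^ ℓ j * π (MvPolynomial.X j.succ) = π (gs j) := by
      have h : (MvPolynomial.C x) ^ ℓ j * MvPolynomial.X j.succ - gs j ∈ RingHom.ker π :=
        hπker ▸ Ideal.subset_span ⟨j, rfl⟩
      rwa [RingHom.mem_ker, map_sub, sub_eq_zero, map_mul, map_pow, MvPolynomial.algHom_C] at h
    refine mem_range_aeval_of_pow_mul_mem hx hsat (ℓ j) (hgen ▸ ?_)
    refine MvPolynomial.apply_mem_of_mem_supported π (fun k hk => ih k ?_) (hgs j)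
    rw [Fin.lt_def, Fin.val_succ]
    exact Nat.lt_succ_of_le hk

lemma C_dvd_map_pderiv_last_of_mem_ker {x : A} {z : B} {ν : ℕ}
    {π : MvPolynomial (Fin (ν + 1)) A →ₐ[A] B} {ψ : MvPolynomial (Fin (ν + 1)) A →ₐ[A] A[X]}
    (hπψ : π = (aeval (R := A) z).comp ψ)
    (hsat : ∀ F : A[X], algebraMap A B x ∣ aeval z F → C x ∣ F)
    {gs : Fin ν → MvPolynomial (Fin (ν + 1)) A}
    (hgs : ∀ i : Fin ν, gs i ∈ MvPolynomial.supported A {j : Fin (ν + 1) | (j : ℕ) ≤ (i : ℕ)})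
    {ℓ : Fin ν → ℕ} (hℓ : ∀ i, 0 < ℓ i)
    (hπker : RingHom.ker π = Ideal.span (Set.range fun i : Fin ν =>
      (MvPolynomial.C x) ^ ℓ i * MvPolynomial.X i.succ - gs i))
    {f : MvPolynomial (Fin (ν + 1)) A} (hf : f ∈ RingHom.ker π) :
    C x ∣ ψ (MvPolynomial.pderiv (Fin.last ν) f) := by
  have hψ_ker (f) (hf : f ∈ RingHom.ker π) : C x ∣ ψ f :=
    hsat _ (by rw [← AlgHom.comp_apply, ← hπψ, RingHom.mem_ker.mp hf]; exact dvd_zero _)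
  rw [hπker] at hf
  refine Ideal.mem_span_singleton.mp
    (MvPolynomial.map_pderiv_mem_of_mem_span (ψ : _ →+* A[X]) _ _ ?_ hf)
  rintro _ ⟨i, rfl⟩
  refine ⟨Ideal.mem_span_singleton.mpr (hψ_ker _ (hπker ▸ Ideal.subset_span ⟨i, rfl⟩)), ?_⟩
  have hlast : Fin.last ν ∉ {j : Fin (ν + 1) | (j : ℕ) ≤ i} := by simp
  rw [map_sub, MvPolynomial.pderiv_eq_zero_of_mem_supported hlast (hgs i), sub_zero,
    ← map_pow, MvPolynomial.pderiv_C_mul, Ideal.mem_span_singleton, RingHom.coe_coe, map_mul,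
    MvPolynomial.algHom_C, algebraMap_eq, map_pow]
  exact dvd_mul_of_dvd_left (dvd_pow_self _ (hℓ i).ne') _

end

theorem stmt9
    (A : Type) [CommRing A]
    (x : A) (hx : Prime x)
    (ν : ℕ) (hν : 1 ≤ ν)
    (gs : Fin ν → MvPolynomial (Fin (ν + 1)) A)
    (hgs : ∀ i : Fin ν,
      gs i ∈ MvPolynomial.supported A {j : Fin (ν + 1) | (j : ℕ) ≤ (i : ℕ)} ∧
      gs i ∉ MvPolynomial.supported A {j : Fin (ν + 1) | (j : ℕ) < (i : ℕ)})
    (ℓ : Fin ν → ℕ) (hℓ : ∀ i, 0 < ℓ i)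
    (B : Type) [CommRing B] [IsDomain B] [Algebra A B]
    (π : MvPolynomial (Fin (ν + 1)) A →ₐ[A] B)
    (hπker : RingHom.ker π = Ideal.span (Set.range fun i : Fin ν =>
      (MvPolynomial.C x) ^ ℓ i * MvPolynomial.X i.succ - gs i))
    (hza : ∀ a : A,
      π (MvPolynomial.X 0) - algebraMap A B a ∉ Ideal.span {algebraMap A B x}) :
    ¬ Nonempty (B ≃ₐ[A] Polynomial A) := by
  rintro ⟨φ⟩
  have hsat := C_dvd_of_algebraMap_dvd_aeval φ hx fun a => by
    simpa only [Ideal.mem_span_singleton] using hza a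
  have hx0 : algebraMap A B x ≠ 0 := fun h => hx.ne_zero <| C_eq_zero.mp <| by
    rw [← algebraMap_eq, ← φ.commutes, h, map_zero]
  choose Q hQ using fun i => (AlgHom.mem_range _).mp <|
    X_mem_range_aeval_of_triangular hx0 hsat (fun i => (hgs i).1) hπker i
  have hπψ : π = (aeval (R := A) (π (MvPolynomial.X 0))).comp (MvPolynomial.aeval Q) :=
    MvPolynomial.algHom_ext fun i => by simp [hQ]
  have hY : MvPolynomial.X (Fin.last ν) - aeval (MvPolynomial.X 0) (Q (Fin.last ν)) ∈
      RingHom.ker π := by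
    rw [RingHom.mem_ker, map_sub, ← aeval_algHom_apply, hQ, sub_self]
  have hone := C_dvd_map_pderiv_last_of_mem_ker hπψ hsat (fun i => (hgs i).1) hℓ hπker hY
  rw [MvPolynomial.pderiv_X_sub_aeval_X (by simp [Fin.ext_iff]; omega), map_one] at hone
  exact hx.not_isUnit (isUnit_C.mp (isUnit_of_dvd_one hone))
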